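/- Let p be a prime, let G be a finite p-group of nilpotency class at most 2 with |Z(G)|² ≤ |G|, let r ≥ 1 and 0 ≤ s_1 ≤ ⋯ ≤ s_r be integers, and let w be the word in 2r variables w = [x_1,x_2]^{p^{s_1}} ⋯ [x_{2r−1},x_{2r}]^{p^{s_r}}. Then the generalized Amit bound holds for w: N_{w,G}(g) ≥ |G|^{2r−1} for every w-value g ∈ G_w. -/

import Mathlib

/-! In class two the commutator `[x, y]` is central and multiplicative in each variable, so the
word map of `w` factors as `f ↦ β (f₀, f₂, …) (f₁, f₃, …)` through a bihomomorphism
`β : Gʳ → Gʳ → Z(G)`. If `β b c = g`, then `β (b t) (c k) = g` as soon as `β t c = 1` and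
`β (b t) k = 1`. Each condition cuts out the kernel of a homomorphism to `Z(G)`, so there are at
least `|G|ʳ / |Z(G)|` choices of `t` and then of `k`; hence
`N_w(g) ≥ |G|^{2r} / |Z(G)|² ≥ |G|^{2r-1}`. -/

/-- The word `[x₁,x₂]^{p^{s₁}} ⋯ [x_{2r-1},x_{2r}]^{p^{s_r}}` (with `[x,y] = x⁻¹y⁻¹xy`)
in `2r` variables. -/
def wCommPow (p r : ℕ) (s : Fin r → ℕ) : FreeGroup (Fin (2 * r)) :=
  (List.ofFn fun i : Fin r =>
    ((FreeGroup.of (⟨2 * i.val, by have := i.isLt; omega⟩ : Fin (2 * r)))⁻¹ *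
     (FreeGroup.of (⟨2 * i.val + 1, by have := i.isLt; omega⟩ : Fin (2 * r)))⁻¹ *
     FreeGroup.of (⟨2 * i.val, by have := i.isLt; omega⟩ : Fin (2 * r)) *
     FreeGroup.of (⟨2 * i.val + 1, by have := i.isLt; omega⟩ : Fin (2 * r))) ^ (p ^ s i)).prod

/-- `N_{w,G}(g)`: the number of tuples in `G` on which the word `w` evaluates to `g`. -/
noncomputable def wordFibreCard {k : ℕ} (G : Type*) [Group G] (w : FreeGroup (Fin k)) (g : G) : ℕ :=
  Nat.card {f : Fin k → G // FreeGroup.lift f w = g}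

namespace MonoidHom

variable {H K A : Type*} [Group H] [Group K]

theorem card_le_card_ker_mul [Group A] [Finite A] (φ : H →* A) :
    Nat.card H ≤ Nat.card φ.ker * Nat.card A := by
  rw [← φ.ker.card_mul_index, Subgroup.index_ker]
  exact Nat.mul_le_mul_left _ (Subgroup.card_le_card_group _)

theorem card_mul_card_le_card_fiber_mul_sq [CommGroup A] [Finite H] [Finite K] [Finite A]
    (β : H →* K →* A) (x₀ : H) (y₀ : K) :
    Nat.card H * Nat.card K ≤
      Nat.card {xy : H × K // β xy.1 xy.2 = β x₀ y₀} * Nat.card A ^ 2 := by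
  classical
  let fiber := {xy : H × K // β xy.1 xy.2 = β x₀ y₀}
  let pairs := Σ t : (β.flip y₀).ker, (β (x₀ * t)).ker
  have hpairs : Nat.card pairs ≤ Nat.card fiber := by
    refine Nat.card_le_card_of_injective
      (fun tk => ⟨(x₀ * tk.1, y₀ * tk.2), ?_⟩) fun tk tk' h => ?_
    · have ht : β tk.1 y₀ = 1 := tk.1.2
      have hk : β (x₀ * tk.1) tk.2 = 1 := tk.2.2
      rw [map_mul (β _), hk, mul_one, map_mul, MonoidHom.mul_apply, ht, mul_one]
    · obtain ⟨ht, hk⟩ := Prod.ext_iff.mp (congrArg Subtype.val h)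
      exact Sigma.subtype_ext (Subtype.ext (mul_left_cancel ht)) (mul_left_cancel hk)
  have hsum : Nat.card (β.flip y₀).ker * Nat.card K ≤ Nat.card pairs * Nat.card A := by
    have := Fintype.ofFinite (β.flip y₀).ker
    calc Nat.card (β.flip y₀).ker * Nat.card K = ∑ _t : (β.flip y₀).ker, Nat.card K := by
          rw [Finset.sum_const, Finset.card_univ, smul_eq_mul, Nat.card_eq_fintype_card]
      _ ≤ ∑ t : (β.flip y₀).ker, Nat.card (β (x₀ * t)).ker * Nat.card A :=
          Finset.sum_le_sum fun t _ => (β (x₀ * t)).card_le_card_ker_mul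
      _ = Nat.card pairs * Nat.card A := by rw [Nat.card_sigma, Finset.sum_mul]
  calc Nat.card H * Nat.card K
      ≤ Nat.card (β.flip y₀).ker * Nat.card A * Nat.card K :=
        Nat.mul_le_mul_right _ (β.flip y₀).card_le_card_ker_mul
    _ = Nat.card (β.flip y₀).ker * Nat.card K * Nat.card A := by ring
    _ ≤ Nat.card pairs * Nat.card A * Nat.card A := Nat.mul_le_mul_right _ hsum
    _ ≤ Nat.card fiber * Nat.card A ^ 2 := by rw [sq, ← mul_assoc]; gcongr

end MonoidHom

open scoped IsMulCommutative

section CommutatorPairing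

variable {G : Type*} [Group G]

theorem inv_mul_inv_mul_mul_mem_commutator (x y : G) : x⁻¹ * y⁻¹ * x * y ∈ commutator G := by
  rw [commutator_def]
  simpa [commutatorElement_def] using Subgroup.commutator_mem_commutator (Subgroup.mem_top x⁻¹)
    (Subgroup.mem_top y⁻¹)

def commutatorCenterHom (hG : commutator G ≤ Subgroup.center G) :
    G →* G →* Subgroup.center G :=
  MonoidHom.mk' (fun x => MonoidHom.mk'
    (fun y => ⟨x⁻¹ * y⁻¹ * x * y, hG (inv_mul_inv_mul_mul_mem_commutator x y)⟩)
    fun y y' => by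
      have hc := Subgroup.mem_center_iff.mp (hG (inv_mul_inv_mul_mul_mem_commutator x y))
      ext
      calc x⁻¹ * (y * y')⁻¹ * x * (y * y')
          = x⁻¹ * y'⁻¹ * x * y' * (y'⁻¹ * (x⁻¹ * y⁻¹ * x * y) * y') := by group
        _ = x⁻¹ * y'⁻¹ * x * y' * (x⁻¹ * y⁻¹ * x * y) := by rw [hc, inv_mul_cancel_right]
        _ = x⁻¹ * y⁻¹ * x * y * (x⁻¹ * y'⁻¹ * x * y') := hc _)
    fun x x' => by
      ext y
      have hc := Subgroup.mem_center_iff.mp (hG (inv_mul_inv_mul_mul_mem_commutator x y))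
      calc (x * x')⁻¹ * y⁻¹ * (x * x') * y
          = x'⁻¹ * (x⁻¹ * y⁻¹ * x * y) * x' * (x'⁻¹ * y⁻¹ * x' * y) := by group
        _ = x⁻¹ * y⁻¹ * x * y * (x'⁻¹ * y⁻¹ * x' * y) := by rw [hc, inv_mul_cancel_right]

@[simp]
theorem coe_commutatorCenterHom_apply (hG : commutator G ≤ Subgroup.center G) (x y : G) :
    (commutatorCenterHom hG x y : G) = x⁻¹ * y⁻¹ * x * y :=
  rfl

end CommutatorPairing

namespace MonoidHom

variable {ι M N P : Type*} [Fintype ι] [MulOneClass M] [MulOneClass N] [CommMonoid P]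

def piWeighted (β : M →* N →* P) (q : ι → ℕ) : (ι → M) →* (ι → N) →* P :=
  ∏ i, ((β.comp (Pi.evalMonoidHom _ i)).compl₂ (Pi.evalMonoidHom _ i)) ^ q i

@[simp]
theorem piWeighted_apply (β : M →* N →* P) (q : ι → ℕ) (x : ι → M) (y : ι → N) :
    β.piWeighted q x y = ∏ i, β (x i) (y i) ^ q i := by
  simp [piWeighted, MonoidHom.finsetProd_apply, MonoidHom.pow_apply]

end MonoidHom

section Interleave

variable {α : Type*} {r : ℕ}

def evenPart (f : Fin (2 * r) → α) (i : Fin r) : α := f ⟨2 * i, by omega⟩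

def oddPart (f : Fin (2 * r) → α) (i : Fin r) : α := f ⟨2 * i + 1, by omega⟩

def interleave (u v : Fin r → α) (j : Fin (2 * r)) : α :=
  if j.val % 2 = 0 then u ⟨j / 2, by omega⟩ else v ⟨j / 2, by omega⟩

@[simp]
theorem evenPart_interleave (u v : Fin r → α) : evenPart (interleave u v) = u := by
  funext i
  simp [evenPart, interleave]

@[simp]
theorem oddPart_interleave (u v : Fin r → α) : oddPart (interleave u v) = v := by
  funext i
  simp only [oddPart, interleave]
  rw [if_neg (by omega)]
  congr 1
  ext
  simp only
  omega

end Interleave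

section CommutatorPowWord

variable {G : Type*} [Group G] (hG : commutator G ≤ Subgroup.center G)

theorem lift_wCommPow (p r : ℕ) (s : Fin r → ℕ) (f : Fin (2 * r) → G) :
    FreeGroup.lift f (wCommPow p r s) =
      (commutatorCenterHom hG).piWeighted (fun i => p ^ s i) (evenPart f) (oddPart f) := by
  rw [wCommPow, map_list_prod, List.map_ofFn, MonoidHom.piWeighted_apply, ← List.prod_ofFn,
    Subgroup.val_list_prod, List.map_ofFn]
  congr 2
  funext i
  simp [evenPart, oddPart]

theorem card_fiber_le_wordFibreCard [Finite G] (p r : ℕ) (s : Fin r → ℕ)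
    (f : Fin (2 * r) → G) :
    Nat.card {xy : (Fin r → G) × (Fin r → G) //
        (commutatorCenterHom hG).piWeighted (fun i => p ^ s i) xy.1 xy.2 =
          (commutatorCenterHom hG).piWeighted (fun i => p ^ s i) (evenPart f) (oddPart f)} ≤
      wordFibreCard G (wCommPow p r s) (FreeGroup.lift f (wCommPow p r s)) := by
  refine Nat.card_le_card_of_injective (fun xy => ⟨interleave xy.1.1 xy.1.2, ?_⟩)
    fun xy xy' h => ?_
  · simp only [lift_wCommPow hG, evenPart_interleave, oddPart_interleave, xy.2]
  · have h' := congrArg Subtype.val h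
    exact Subtype.ext <| Prod.ext (by simpa using congrArg evenPart h')
      (by simpa using congrArg oddPart h')

end CommutatorPowWord

theorem amit_bound_of_commutator_power_word_general (p : ℕ)
    (G : Type*) [Group G] [Finite G]
    (hclass : commutator G ≤ Subgroup.center G)
    (hZ : Nat.card (Subgroup.center G) ^ 2 ≤ Nat.card G)
    (r : ℕ) (hr : 1 ≤ r) (s : Fin r → ℕ)
    (g : G)
    (hg : g ∈ Set.range fun f : Fin (2 * r) → G => FreeGroup.lift f (wCommPow p r s)) :
    Nat.card G ^ (2 * r - 1) ≤ wordFibreCard G (wCommPow p r s) g := by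
  obtain ⟨f, rfl⟩ := hg
  have hfiber := ((commutatorCenterHom hclass).piWeighted fun i => p ^ s i)
    |>.card_mul_card_le_card_fiber_mul_sq (evenPart f) (oddPart f)
  have hword := card_fiber_le_wordFibreCard hclass p r s f
  rw [Nat.card_fun, Nat.card_fin] at hfiber
  have hz : 0 < Nat.card (Subgroup.center G) ^ 2 := pow_pos Nat.card_pos 2
  refine (Nat.le_of_mul_le_mul_right ?_ hz).trans hword
  calc Nat.card G ^ (2 * r - 1) * Nat.card (Subgroup.center G) ^ 2
      ≤ Nat.card G ^ (2 * r - 1) * Nat.card G := Nat.mul_le_mul_left _ hZ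
    _ = Nat.card G ^ r * Nat.card G ^ r := by rw [← pow_succ, ← pow_add]; congr 1; omega
    _ ≤ _ := hfiber

/-- for a finite `p`-group `G` of nilpotency class at most 2 with
`|Z(G)|² ≤ |G|` and the word `w = [x₁,x₂]^{p^{s₁}} ⋯ [x_{2r-1},x_{2r}]^{p^{s_r}}` with
`0 ≤ s₁ ≤ ⋯ ≤ s_r`, the generalized Amit bound `N_{w,G}(g) ≥ |G|^{2r-1}` holds for every
`w`-value `g`. -/
theorem amit_bound_of_commutator_power_word (p : ℕ) (hp : p.Prime)
    (G : Type*) [Group G] [Finite G] (hpG : IsPGroup p G)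
    (hclass : commutator G ≤ Subgroup.center G)
    (hZ : Nat.card (Subgroup.center G) ^ 2 ≤ Nat.card G)
    (r : ℕ) (hr : 1 ≤ r) (s : Fin r → ℕ) (hs : Monotone s)
    (g : G)
    (hg : g ∈ Set.range fun f : Fin (2 * r) → G => FreeGroup.lift f (wCommPow p r s)) :
    Nat.card G ^ (2 * r - 1) ≤ wordFibreCard G (wCommPow p r s) g :=
  amit_bound_of_commutator_power_word_general p G hclass hZ r hr s g hg
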